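/- arXiv:math/0501498 — 6 statements merged into one kernel-verified Lean document; each statement's English description precedes it below -/
import Mathlib

section
/- Let n ≥ 1 and let λ, μ be partitions with l(λ) ≤ n and l(μ) ≤ n. If μ is not contained in λ (i.e. μ_k > λ_k for some k), then det[ C(λ_k + n − k, μ_l + n − l) ]_{1≤k,l≤n} = 0, where C(a,b) denotes the binomial coefficient (equal to 0 when b > a). -/
/-!
Pick `j` with `λ_j < μ_j`. For rows `k ≥ j` and columns `l ≤ j` the shifted parts satisfy
`λ_k + n − k ≤ λ_j + n − j < μ_j + n − j ≤ μ_l + n − l`, so those entries vanish. The resulting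
zero block has `n − j + 1` rows and `j` columns (1-based), too large for a nonzero determinant.
-/

/-- `E_{λ/μ}(n) = det[ C(λ_k + n − k, μ_l + n − l) ]_{1≤k,l≤n}` (indices written 0-based). -/
def Edet (n : ℕ) (lam mu : ℕ → ℕ) : ℤ :=
  (Matrix.of fun k l : Fin n =>
    ((lam k + (n - 1 - (k : ℕ))).choose (mu l + (n - 1 - (l : ℕ))) : ℤ)).det

namespace Matrix

theorem det_eq_zero_of_apply_eq_zero_of_le_of_le {ι R : Type*} [Fintype ι] [LinearOrder ι]
    [CommRing R] (M : Matrix ι ι R) (j : ι) (hM : ∀ k l, j ≤ k → l ≤ j → M k l = 0) :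
    M.det = 0 := by
  rw [twoBlockTriangular_det M (· < j) fun k hk l hl => hM k l (not_lt.mp hk) hl.le]
  have hlower : (toSquareBlockProp M fun i => ¬i < j).det = 0 :=
    det_eq_zero_of_column_eq_zero ⟨j, lt_irrefl j⟩ fun i => hM i j (not_lt.mp i.2) le_rfl
  rw [hlower, mul_zero]

end Matrix

theorem binomial_det_vanishes_of_not_subset_general
    (n : ℕ) (lam mu : ℕ → ℕ)
    (hlam : Antitone lam) (hmu : Antitone mu)
    (hmulen : ∀ k, n ≤ k → mu k = 0)
    (hnot : ∃ k, lam k < mu k) :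
    Edet n lam mu = 0 := by
  obtain ⟨j, hj⟩ := hnot
  have hjn : j < n := by
    by_contra! h
    have := hmulen j h
    omega
  refine Matrix.det_eq_zero_of_apply_eq_zero_of_le_of_le _ ⟨j, hjn⟩ fun k l hk hl => ?_
  have hlamk : lam k ≤ lam j := hlam hk
  have hmul : mu j ≤ mu l := hmu hl
  have hk' : (k : ℕ) < n := k.2
  have hshift : lam k + (n - 1 - k) < mu l + (n - 1 - l) := by
    simp only [Fin.le_def] at hk hl
    omega
  simp [Nat.choose_eq_zero_of_lt hshift]

theorem binomial_det_vanishes_of_not_subset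
    (n : ℕ) (hn : 1 ≤ n) (lam mu : ℕ → ℕ)
    (hlam : Antitone lam) (hmu : Antitone mu)
    (hlamlen : ∀ k, n ≤ k → lam k = 0) (hmulen : ∀ k, n ≤ k → mu k = 0)
    (hnot : ∃ k, lam k < mu k) :
    Edet n lam mu = 0 :=
  binomial_det_vanishes_of_not_subset_general n lam mu hlam hmu hmulen hnot
end

section
/- (Lascoux's lemma, part 2.) Let n ≥ 1 and let λ be a partition with l(λ) ≤ n. In the polynomial ring ℤ[x_1,…,x_n,t] one has the identity s_λ(x_1 + t, …, x_n + t) = ∑_{μ ⊆ λ} E_{λ/μ}(n) · t^{|λ|−|μ|} · s_μ(x_1,…,x_n), where the sum is over all partitions μ contained in λ. -/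
/-!
STATEMENT 2 (Lascoux's lemma, part 2):
`s_λ(x_1 + t, …, x_n + t) = ∑_{μ ⊆ λ} E_{λ/μ}(n) · t^{|λ|−|μ|} · s_μ(x_1,…,x_n)`
in `ℤ[x_1,…,x_n,t]`.  The ring is `MvPolynomial (Option (Fin n)) ℤ`, with
`t = X none` and `x_a = X (some a)`.  The Schur polynomials `S` (in `n` variables)
are characterized by the bialternant formula, and are pushed into the larger ring by
substituting `x_a ↦ x_a + t` (left side) resp. `x_a ↦ x_a` (right side).
Partitions are encoded 0-based as functions `ℕ → ℕ`.
-/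

open Finset MvPolynomial

/-- Extension of a bounded tuple to a function `ℕ → ℕ` (zero beyond the box). -/
def extF {n : ℕ} {m : Fin n → ℕ} (f : (k : Fin n) → Fin (m k + 1)) : ℕ → ℕ :=
  fun k => if h : k < n then (f ⟨k, h⟩ : ℕ) else 0

/-!
Multiplying by the Vandermonde product reduces the identity to one between alternants
`a_d(x) = det[x_a ^ d_b]` with `d = λ + δ`, `δ = (n-1, …, 0)`. Expanding every column
`(x_a + t) ^ d_b = ∑_j C(d_b, j) t^(d_b - j) x_a ^ j` and applying Cauchy–Binet writes
`a_d(x + t)` as a sum over strictly decreasing `e` of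
`det[C(d_k, e_l) t^(d_k - e_l)] · a_e(x)`. Every nonzero term of that determinant carries the
same power `t^(|d| - |e|)`, and by a pigeonhole argument `det[C(d_k, e_l)] = 0` unless `e ≤ d`,
i.e. unless `e = μ + δ` with `μ ⊆ λ`.
-/

open Matrix

section CauchyBinet

variable {R : Type*} [CommRing R] {n : ℕ} {α : Type*}

theorem Matrix.det_of_sum_eq_sum_piFinset (T : Finset α) (f : Fin n → α → R)
    (v : α → Fin n → R) :
    det (of fun a b => ∑ j ∈ T, f b j * v j a) =
      ∑ r ∈ Fintype.piFinset fun _ => T,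
        (∏ b, f b (r b)) * det (of fun a b => v (r b) a) := by
  simp only [det_apply', of_apply, prod_univ_sum, mul_sum, prod_mul_distrib]
  rw [sum_comm]
  exact sum_congr rfl fun r _ => sum_congr rfl fun σ _ => mul_left_comm _ _ _

theorem Finset.sum_injective_eq_sum_strictAnti_comp_perm {M : Type*} [AddCommMonoid M]
    [LinearOrder α] (T : Finset α) (F : (Fin n → α) → M) :
    ∑ r ∈ (Fintype.piFinset fun _ => T) with Function.Injective r, F r =
      ∑ e ∈ (Fintype.piFinset fun _ => T) with StrictAnti e,
        ∑ σ : Equiv.Perm (Fin n), F (e ∘ σ) := by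
  let sorting (r : Fin n → α) : Equiv.Perm (Fin n) := Tuple.sort (OrderDual.toDual ∘ r)
  rw [← sum_product' (f := fun e (σ : Equiv.Perm (Fin n)) => F (e ∘ σ))]
  refine sum_nbij'
    (fun r => ((r ∘ sorting r : Fin n → α), ((sorting r)⁻¹ : Equiv.Perm (Fin n))))
    (fun p : (Fin n → α) × Equiv.Perm (Fin n) => p.1 ∘ p.2) ?_ ?_ ?_ ?_ ?_
  · intro r hr
    simp only [mem_filter, Fintype.mem_piFinset, mem_product, mem_univ, and_true] at hr ⊢
    exact ⟨fun b => hr.1 _, (monotone_toDual_comp_iff (f := r ∘ sorting r)).mp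
      (Tuple.monotone_sort _) |>.strictAnti_of_injective (hr.2.comp (Equiv.injective _))⟩
  · rintro ⟨e, σ⟩ he
    simp only [mem_filter, Fintype.mem_piFinset, mem_product, mem_univ, and_true] at he ⊢
    exact ⟨fun b => he.1 _, he.2.injective.comp σ.injective⟩
  · intro r _
    ext b
    simp
  · rintro ⟨e, σ⟩ he
    simp only [mem_filter, mem_product] at he
    have hsort : sorting (e ∘ σ) = σ⁻¹ := by
      refine (Tuple.eq_sort_iff.mpr ⟨?_, fun i j hij heq => ?_⟩).symm
      · simpa [Function.comp_def] using monotone_toDual_comp_iff.mpr he.1.2.antitone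
      · simp at heq
        exact absurd (he.1.2.injective heq) hij.ne
    ext b <;> simp [hsort]
  · intro r _
    simp only [Equiv.Perm.coe_inv, Function.comp_assoc, Equiv.self_comp_symm, Function.comp_id]

theorem Matrix.det_of_sum_eq_sum_strictAnti [LinearOrder α] (T : Finset α)
    (f : Fin n → α → R) (v : α → Fin n → R) :
    det (of fun a b => ∑ j ∈ T, f b j * v j a) =
      ∑ e ∈ (Fintype.piFinset fun _ => T) with StrictAnti e,
        det (of fun k l => f k (e l)) * det (of fun a l => v (e l) a) := by
  set F : (Fin n → α) → R := fun r => (∏ b, f b (r b)) * det (of fun a b => v (r b) a)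
  have hF : ∀ r, F r ≠ 0 → Function.Injective r := fun r hr i j hij => by
    by_contra hne
    exact hr (mul_eq_zero_of_right _ (det_zero_of_column_eq hne fun a => by simp [hij]))
  rw [det_of_sum_eq_sum_piFinset, ← sum_filter_of_ne fun r _ => hF r,
    sum_injective_eq_sum_strictAnti_comp_perm]
  refine sum_congr rfl fun e _ => ?_
  rw [← det_transpose, det_apply', sum_mul]
  refine sum_congr rfl fun σ _ => ?_
  simp only [F, Function.comp_apply]
  rw [show (of fun a b => v (e (σ b)) a) = (of fun a l => v (e l) a).submatrix id σ from rfl,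
    det_permute']
  simp only [transpose_apply, of_apply]
  ring

end CauchyBinet

section BinomialDeterminants

variable {n : ℕ}

theorem le_of_forall_le_comp_perm {β : Type*} [LinearOrder β] {d e : Fin n → β}
    (hd : Antitone d) (he : Antitone e) (σ : Equiv.Perm (Fin n)) (h : ∀ i, e i ≤ d (σ i)) :
    e ≤ d := by
  intro b
  by_contra! hb
  have hmaps : Set.MapsTo σ (Iic b) (Iio b) := fun i hi => by
    simp only [coe_Iic, coe_Iio, Set.mem_Iic, Set.mem_Iio] at hi ⊢
    by_contra! hσi
    exact (hb.trans_le ((he hi).trans (h i))).not_ge (hd hσi)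
  have := card_le_card_of_injOn σ hmaps σ.injective.injOn
  simp at this

theorem det_choose_eq_zero_of_not_le {d e : Fin n → ℕ} (hd : Antitone d) (he : Antitone e)
    (hed : ¬ e ≤ d) : det (of fun k l => ((d k).choose (e l) : ℤ)) = 0 := by
  by_contra h
  rw [det_apply'] at h
  obtain ⟨σ, -, hσ⟩ := exists_ne_zero_of_sum_ne_zero h
  refine hed (le_of_forall_le_comp_perm hd he σ fun i => ?_)
  have := prod_ne_zero_iff.mp (right_ne_zero_of_mul hσ) i (mem_univ i)
  simpa [Nat.choose_eq_zero_iff] using this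

variable {R : Type*} [CommRing R]

theorem det_choose_mul_pow (t : R) (d e : Fin n → ℕ) :
    det (of fun k l => ((d k).choose (e l) : R) * t ^ (d k - e l)) =
      (↑(det (of fun k l => ((d k).choose (e l) : ℤ))) : R) *
        t ^ (∑ k, d k - ∑ l, e l) := by
  simp only [det_apply', of_apply, Int.cast_sum, Int.cast_mul, Int.cast_prod, Int.cast_id,
    Int.cast_natCast, sum_mul, prod_mul_distrib, prod_pow_eq_pow_sum]
  refine sum_congr rfl fun σ _ => ?_
  by_cases hle : ∀ l, e l ≤ d (σ l)
  · rw [sum_tsub_distrib _ fun l _ => hle l, Equiv.sum_comp σ d, mul_assoc]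
  · obtain ⟨l, hl⟩ := not_forall.mp hle
    rw [prod_eq_zero (mem_univ l) (by simp [Nat.choose_eq_zero_of_lt (not_le.mp hl)])]
    simp

theorem det_add_pow_eq_sum_strictAnti (x : Fin n → R) (t : R) (d : Fin n → ℕ) :
    det (of fun a b => (x a + t) ^ d b) =
      ∑ e ∈ {e ∈ Fintype.piFinset (fun _ : Fin n => range (univ.sup d + 1)) | StrictAnti e},
        (↑(det (of fun k l => ((d k).choose (e l) : ℤ))) : R) * t ^ (∑ k, d k - ∑ l, e l) *
          det (of fun a l => x a ^ e l) := by
  have hexpand : ∀ a b, (x a + t) ^ d b =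
      ∑ j ∈ range (univ.sup d + 1), ((d b).choose j * t ^ (d b - j)) * x a ^ j := by
    intro a b
    rw [add_pow, sum_subset (range_subset_range.mpr (Nat.succ_le_succ (le_sup (mem_univ b))))]
    · exact sum_congr rfl fun j _ => by ring
    · intro j _ hj
      simp [Nat.choose_eq_zero_of_lt (by simpa using hj)]
  simp only [hexpand, det_of_sum_eq_sum_strictAnti, det_choose_mul_pow]

end BinomialDeterminants

section Partitions

variable {n : ℕ}

theorem extF_coe {m : Fin n → ℕ} (f : (k : Fin n) → Fin (m k + 1)) (k : Fin n) :
    extF f k = f k :=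
  dif_pos k.isLt

theorem extF_of_le {m : Fin n → ℕ} (f : (k : Fin n) → Fin (m k + 1)) {k : ℕ}
    (hk : n ≤ k) :
    extF f k = 0 :=
  dif_neg (by omega)

theorem extF_antitone {m : Fin n → ℕ} {f : (k : Fin n) → Fin (m k + 1)}
    (hf : ∀ a b : Fin n, a ≤ b → (f b : ℕ) ≤ f a) : Antitone (extF f) := by
  intro k l hkl
  by_cases hl : l < n
  · rw [extF, extF, dif_pos hl, dif_pos (hkl.trans_lt hl)]
    exact hf ⟨k, hkl.trans_lt hl⟩ ⟨l, hl⟩ hkl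
  · simp [extF_of_le f (not_lt.mp hl)]

theorem Antitone.strictAnti_add_staircase {g : Fin n → ℕ} (hg : Antitone g) :
    StrictAnti fun l : Fin n => g l + (n - 1 - l) := fun a b hab => by
  have := hg hab.le
  have := b.isLt
  simp only
  omega

theorem StrictAnti.add_sub_le {e : Fin n → ℕ} (he : StrictAnti e) {a b : Fin n}
    (hab : a ≤ b) :
    e b + ((b : ℕ) - a) ≤ e a := by
  have := card_le_card_of_injOn e (s := Ioc a b) (t := Ico (e b) (e a))
    (fun i hi => by
      simp only [coe_Ioc, coe_Ico, Set.mem_Ioc, Set.mem_Ico] at hi ⊢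
      exact ⟨he.antitone hi.2, he hi.1⟩) he.injective.injOn
  simp only [Fin.card_Ioc, Nat.card_Ico] at this
  have := he.antitone hab
  omega

theorem StrictAnti.exists_eq_add_staircase {e : Fin n → ℕ} (he : StrictAnti e) {m : Fin n → ℕ}
    (hle : ∀ l, e l ≤ m l + (n - 1 - l)) :
    ∃ mu : (k : Fin n) → Fin (m k + 1), (∀ a b : Fin n, a ≤ b → (mu b : ℕ) ≤ mu a) ∧
      (fun l : Fin n => (mu l : ℕ) + (n - 1 - l)) = e := by
  have hlow : ∀ l : Fin n, n - 1 - l ≤ e l := fun l => by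
    have := l.isLt
    have := he.add_sub_le (b := ⟨n - 1, by omega⟩)
      (Fin.le_def.mpr (show (l : ℕ) ≤ n - 1 by omega))
    simp only at this
    omega
  refine ⟨fun l => ⟨e l - (n - 1 - l), by have := hle l; omega⟩, fun a b hab => ?_, ?_⟩
  · have := he.add_sub_le hab
    have := b.isLt
    have := hlow b
    show e b - (n - 1 - b) ≤ e a - (n - 1 - a)
    omega
  · funext l
    have := hlow l
    simp only
    omega

variable {R : Type*} [CommRing R]

theorem det_add_pow_eq_sum_edet (x : Fin n → R) (t : R) {lam : ℕ → ℕ}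
    (hlam : Antitone lam) :
    det (of fun a b : Fin n => (x a + t) ^ (lam b + (n - 1 - b))) =
      ∑ mu : (k : Fin n) → Fin (lam k + 1),
        if ∀ a b : Fin n, a ≤ b → (mu b : ℕ) ≤ mu a then
          (Edet n lam (extF mu) : R) * t ^ (∑ k : Fin n, lam k - ∑ k, (mu k : ℕ)) *
            det (of fun a b : Fin n => x a ^ ((mu b : ℕ) + (n - 1 - b)))
        else 0 := by
  set d : Fin n → ℕ := fun b => lam b + (n - 1 - b) with hd_def
  have hd : StrictAnti d :=
    Antitone.strictAnti_add_staircase (g := fun b => lam b) fun a b hab => hlam hab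
  let shift (mu : (k : Fin n) → Fin (lam k + 1)) (l : Fin n) : ℕ := mu l + (n - 1 - l)
  change det (of fun a b => (x a + t) ^ d b) = _
  rw [det_add_pow_eq_sum_strictAnti, ← sum_filter]
  symm
  refine sum_of_injOn shift ?_ ?_ ?_ ?_
  · intro mu _ mu' _ h
    funext l
    exact Fin.ext (by have := congrFun h l; simp only [shift] at this; omega)
  · intro mu hmu
    simp only [coe_filter, mem_univ, true_and, Set.mem_ofPred_eq, Fintype.mem_piFinset,
      mem_range] at hmu ⊢
    refine ⟨fun l => Nat.lt_succ_of_le (le_trans ?_ (le_sup (mem_univ l))),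
      Antitone.strictAnti_add_staircase (g := fun l => (mu l : ℕ)) fun a b hab => hmu a b hab⟩
    have := (mu l).is_le
    simp only [shift, hd_def]
    omega
  · intro e he hnot
    rw [mem_filter] at he
    suffices h : det (of fun k l => ((d k).choose (e l) : ℤ)) = 0 by simp [h]
    refine det_choose_eq_zero_of_not_le hd.antitone he.2.antitone fun hed => hnot ?_
    obtain ⟨mu, hmu, rfl⟩ := he.2.exists_eq_add_staircase (m := fun k => lam k) hed
    exact ⟨mu, by simpa using hmu, rfl⟩
  · intro mu _
    have hE : Edet n lam (extF mu) = det (of fun k l => ((d k).choose (shift mu l) : ℤ)) := by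
      simp only [Edet, extF_coe]
      rfl
    have hexp : ∑ k : Fin n, lam k - ∑ k, (mu k : ℕ) = ∑ k, d k - ∑ l, shift mu l := by
      simp only [hd_def, shift, sum_add_distrib, Nat.add_sub_add_right]
    rw [hE, hexp]

end Partitions

theorem lascoux_part2_general (n : ℕ)
    (lam : ℕ → ℕ) (hlam : Antitone lam) (hlamlen : ∀ k, n ≤ k → lam k = 0)
    (S : (ℕ → ℕ) → MvPolynomial (Fin n) ℤ)
    -- bialternant characterization of the Schur polynomials:
    (hS : ∀ nu : ℕ → ℕ, Antitone nu → (∀ k, n ≤ k → nu k = 0) →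
      S nu * ∏ q ∈ Finset.univ.filter (fun q : Fin n × Fin n => q.1 < q.2),
          (X q.1 - X q.2)
        = (Matrix.of fun a b : Fin n =>
            (X a : MvPolynomial (Fin n) ℤ) ^ (nu (b : ℕ) + (n - 1 - (b : ℕ)))).det) :
    aeval (fun a : Fin n =>
        (X (some a) + X none : MvPolynomial (Option (Fin n)) ℤ)) (S lam)
      = ∑ mu : (k : Fin n) → Fin (lam (k : ℕ) + 1),
          if (∀ a b : Fin n, a ≤ b → ((mu b : ℕ) ≤ (mu a : ℕ))) then
            C (Edet n lam (extF mu))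
              * (X none : MvPolynomial (Option (Fin n)) ℤ)
                  ^ ((∑ k : Fin n, lam (k : ℕ)) - ∑ k : Fin n, (mu k : ℕ))
              * aeval (fun a : Fin n => (X (some a) : MvPolynomial (Option (Fin n)) ℤ))
                  (S (extF mu))
          else 0 := by
  set V : MvPolynomial (Fin n) ℤ :=
    ∏ q ∈ univ.filter (fun q : Fin n × Fin n => q.1 < q.2), (X q.1 - X q.2)
  set ψ : MvPolynomial (Fin n) ℤ →ₐ[ℤ] MvPolynomial (Option (Fin n)) ℤ :=
    aeval fun a => X (some a)
  have hSchur (g : MvPolynomial (Fin n) ℤ →ₐ[ℤ] MvPolynomial (Option (Fin n)) ℤ) (nu : ℕ → ℕ)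
      (hnu : Antitone nu) (hnulen : ∀ k, n ≤ k → nu k = 0) :
      g (S nu) * g V = det (of fun a b : Fin n => g (X a) ^ (nu b + (n - 1 - b))) := by
    rw [← map_mul, hS nu hnu hnulen, AlgHom.map_det]
    congr 1
    ext a b
    simp
  have hV : ψ V ≠ 0 := by
    simp only [V, map_prod, prod_ne_zero_iff, mem_filter]
    intro q hq
    simpa [ψ, sub_eq_zero] using hq.2.ne
  have hshift : aeval (fun a => X (some a) + X none) V = ψ V := by
    simp [V, ψ]
  apply mul_right_cancel₀ hV
  rw [← hshift, hSchur _ lam hlam hlamlen]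
  simp only [aeval_X]
  rw [det_add_pow_eq_sum_edet _ _ hlam, hshift, sum_mul]
  refine sum_congr rfl fun mu _ => ?_
  split_ifs with hmu
  · rw [mul_assoc (_ * _) (ψ _), hSchur ψ _ (extF_antitone hmu) fun k => extF_of_le mu]
    simp [ψ, extF_coe, eq_intCast C, mul_assoc]
  · exact (zero_mul _).symm

theorem lascoux_part2 (n : ℕ) (hn : 1 ≤ n)
    (lam : ℕ → ℕ) (hlam : Antitone lam) (hlamlen : ∀ k, n ≤ k → lam k = 0)
    (S : (ℕ → ℕ) → MvPolynomial (Fin n) ℤ)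
    -- bialternant characterization of the Schur polynomials:
    (hS : ∀ nu : ℕ → ℕ, Antitone nu → (∀ k, n ≤ k → nu k = 0) →
      S nu * ∏ q ∈ Finset.univ.filter (fun q : Fin n × Fin n => q.1 < q.2),
          (X q.1 - X q.2)
        = (Matrix.of fun a b : Fin n =>
            (X a : MvPolynomial (Fin n) ℤ) ^ (nu (b : ℕ) + (n - 1 - (b : ℕ)))).det) :
    aeval (fun a : Fin n =>
        (X (some a) + X none : MvPolynomial (Option (Fin n)) ℤ)) (S lam)
      = ∑ mu : (k : Fin n) → Fin (lam (k : ℕ) + 1),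
          if (∀ a b : Fin n, a ≤ b → ((mu b : ℕ) ≤ (mu a : ℕ))) then
            C (Edet n lam (extF mu))
              * (X none : MvPolynomial (Option (Fin n)) ℤ)
                  ^ ((∑ k : Fin n, lam (k : ℕ)) - ∑ k : Fin n, (mu k : ℕ))
              * aeval (fun a : Fin n => (X (some a) : MvPolynomial (Option (Fin n)) ℤ))
                  (S (extF mu))
          else 0 :=
  lascoux_part2_general n lam hlam hlamlen S hS
end

section
/- (Vanishing of supersymmetric Schur polynomials.) Let n, p ≥ 1 and let λ be a partition containing the block partition ((n+1)^{p+1}), i.e. λ_l ≥ n+1 for all 1 ≤ l ≤ p+1. Then in ℤ[x_1,…,x_n,y_1,…,y_p] one has s_λ(B−A) = 0, where s_λ(B−A) := det[ c_{(λ~)_k − k + l} ]_{1≤k,l≤λ_1} and c_d := ∑_{a=0}^{d} (−1)^a h_a(x_1,…,x_n) e_{d−a}(y_1,…,y_p) (with c_0 = 1 and c_d = 0 for d < 0). -/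
/-!
Multiplying the matrix `(c_{(λ~)_k - k + l})_{k,l}` on the right by the unitriangular Toeplitz
matrix `(e_{l-j}(x))_{j ≤ l}` does not change its determinant. Since
`∏_a (1 + x_a t) · ∑_d c_d t^d = ∏_b (1 + y_b t)` and `e_a(x) = 0` for `a > n`, the product has
entry `e_{(λ~)_k - k + l}(y)` in row `k` and column `l ≥ n`. For `k ≤ n` (0-based) the block
condition gives `(λ~)_k ≥ p + 1`, so this entry vanishes: the `n + 1` rows `k ≤ n` are supported
in the `n` columns `l < n`, and every term of the Leibniz expansion contains a zero factor.
-/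

open Finset MvPolynomial

/-- The conjugate partition, 0-based: `conjP lam m = (λ~)_{m+1} = #{k : λ_k ≥ m+1}`. -/
noncomputable def conjP (lam : ℕ → ℕ) (m : ℕ) : ℕ := Nat.card {k : ℕ // m + 1 ≤ lam k}

/-- The complete homogeneous symmetric polynomial `h_a(x_1,…,x_n)` in the x-variables. -/
noncomputable def hsymX (n p a : ℕ) : MvPolynomial (Fin n ⊕ Fin p) ℤ :=
  ∑ f ∈ Finset.Nat.antidiagonalTuple n a, ∏ k, X (Sum.inl k) ^ f k

/-- The elementary symmetric polynomial `e_b(y_1,…,y_p)` in the y-variables. -/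
noncomputable def esymY (n p b : ℕ) : MvPolynomial (Fin n ⊕ Fin p) ℤ :=
  ∑ t ∈ Finset.powersetCard b (Finset.univ : Finset (Fin p)), ∏ i ∈ t, X (Sum.inr i)

/-- `c_d = ∑_{a=0}^{d} (−1)^a h_a(x) e_{d−a}(y)`, the Chern class of `B^p − A^n`. -/
noncomputable def cpoly (n p d : ℕ) : MvPolynomial (Fin n ⊕ Fin p) ℤ :=
  ∑ a ∈ Finset.range (d + 1), (-1) ^ a * hsymX n p a * esymY n p (d - a)

/-- `c_d` for integer `d`, with `c_d = 0` for `d < 0`. -/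
noncomputable def cInt (n p : ℕ) (d : ℤ) : MvPolynomial (Fin n ⊕ Fin p) ℤ :=
  if 0 ≤ d then cpoly n p d.toNat else 0

/-- The supersymmetric Schur polynomial
`s_λ(B−A) = det[ c_{(λ~)_k − k + l} ]_{1≤k,l≤λ_1}` (indices written 0-based). -/
noncomputable def superSchur (n p : ℕ) (lam : ℕ → ℕ) : MvPolynomial (Fin n ⊕ Fin p) ℤ :=
  (Matrix.of fun k l : Fin (lam 0) =>
    cInt n p ((conjP lam (k : ℕ) : ℤ) - (k : ℕ) + (l : ℕ))).det


theorem Fin.sum_ite_le_sub_eq_sum_range {R : Type*} [AddCommMonoid R] {r : ℕ} (l : Fin r)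
    (g : ℕ → R) : ∑ j : Fin r, (if j ≤ l then g (l - j) else 0) = ∑ i ∈ range (l + 1), g i := by
  simp_rw [Fin.le_iff_val_le_val]
  rw [Fin.sum_univ_eq_sum_range (fun j => if j ≤ (l : ℕ) then g (l - j) else 0) r, ← sum_filter,
    ← sum_range_reflect]
  congr 1
  ext j
  simp only [mem_filter, mem_range, Order.lt_add_one_iff, and_iff_right_iff_imp]
  omega

namespace Matrix

theorem det_eq_zero_of_card_lt {ι R : Type*} [Fintype ι] [DecidableEq ι] [CommRing R]
    {M : Matrix ι ι R} {S T : Finset ι} (hST : #T < #S) (hM : ∀ i ∈ S, ∀ j ∉ T, M i j = 0) :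
    M.det = 0 := by
  rw [det_apply]
  refine sum_eq_zero fun σ _ => ?_
  obtain ⟨j, hjS, hjT⟩ := exists_mem_notMem_of_card_lt_card
    (s := T) (t := S.map σ.symm.toEmbedding) (by rwa [card_map])
  rw [mem_map_equiv, Equiv.symm_symm] at hjS
  rw [prod_eq_zero (f := fun i => M (σ i) i) (mem_univ j) (hM _ hjS j hjT), smul_zero]

def upperToeplitz {R : Type*} [Zero R] (r : ℕ) (g : ℕ → R) : Matrix (Fin r) (Fin r) R :=
  of fun j l => if j ≤ l then g (l - j) else 0

variable {R : Type*} [CommRing R] {r : ℕ}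

theorem det_upperToeplitz {g : ℕ → R} (hg : g 0 = 1) : (upperToeplitz r g).det = 1 := by
  have htri : (upperToeplitz r g).IsUpperTriangular := fun i j (hji : j < i) =>
    if_neg (not_le.2 hji)
  rw [det_of_isUpperTriangular htri]
  exact prod_eq_one fun i _ => by simp [upperToeplitz, hg]

theorem of_add_mul_upperToeplitz_apply (a : Fin r → ℤ) (F : ℤ → R) (g : ℕ → R) (k l : Fin r) :
    (of (fun k j : Fin r => F (a k + j)) * upperToeplitz r g) k l =
      ∑ i ∈ range (l + 1), g i * F (a k + l - i) := by
  rw [mul_apply, ← Fin.sum_ite_le_sub_eq_sum_range]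
  refine sum_congr rfl fun j _ => ?_
  simp only [upperToeplitz, of_apply, mul_ite, mul_zero]
  split_ifs with hjl
  · have : (j : ℕ) ≤ l := hjl
    rw [mul_comm]
    congr 2
    omega
  · rfl

end Matrix

namespace PowerSeries

variable {R : Type*} [CommRing R]

theorem coeff_prod_one_add_C_mul_X {ι : Type*} (x : ι → R) (s : Finset ι) (d : ℕ) :
    coeff d (∏ i ∈ s, (1 + C (x i) * X)) = ∑ t ∈ s.powersetCard d, ∏ i ∈ t, x i := by
  classical
  simp only [prod_one_add, prod_mul_distrib, prod_const, ← map_prod, map_sum, coeff_C_mul_X_pow,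
    powersetCard_eq_filter, sum_filter, eq_comm (a := d)]

theorem one_add_C_mul_X_mul_mk_neg_pow (c : R) : (1 + C c * X) * mk (fun j => (-c) ^ j) = 1 := by
  ext (_ | d)
  · simp
  · simp [add_mul, mul_assoc, coeff_succ_X_mul, pow_succ]
    ring

end PowerSeries

theorem le_conjP {lam : ℕ → ℕ} {N : ℕ} (hlamN : ∀ k, N ≤ k → lam k = 0) {m q : ℕ}
    (hq : ∀ l < q, m + 1 ≤ lam l) : q ≤ conjP lam m := by
  have hfin : {k | m + 1 ≤ lam k}.Finite := (Set.finite_Iio N).subset fun k hk => by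
    by_contra hkN
    simp [hlamN k (not_lt.1 hkN)] at hk
  have : Finite {k // m + 1 ≤ lam k} := hfin.to_subtype
  exact Nat.card_fin q ▸ Nat.card_le_card_of_injective (fun l : Fin q => ⟨l, hq l l.2⟩)
    fun i j hij => Fin.ext (congrArg Subtype.val hij)

section SymmetricFunctions

variable (n p : ℕ)

noncomputable def esymX (a : ℕ) : MvPolynomial (Fin n ⊕ Fin p) ℤ :=
  ∑ t ∈ powersetCard a (univ : Finset (Fin n)), ∏ i ∈ t, X (Sum.inl i)

noncomputable def esymXSeries : PowerSeries (MvPolynomial (Fin n ⊕ Fin p) ℤ) :=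
  ∏ a : Fin n, (1 + PowerSeries.C (X (Sum.inl a)) * PowerSeries.X)

noncomputable def esymYSeries : PowerSeries (MvPolynomial (Fin n ⊕ Fin p) ℤ) :=
  ∏ b : Fin p, (1 + PowerSeries.C (X (Sum.inr b)) * PowerSeries.X)

noncomputable def esymXSeriesInv : PowerSeries (MvPolynomial (Fin n ⊕ Fin p) ℤ) :=
  ∏ a : Fin n, PowerSeries.mk fun j => (-X (Sum.inl a)) ^ j

theorem coeff_esymXSeries (d : ℕ) : PowerSeries.coeff d (esymXSeries n p) = esymX n p d :=
  PowerSeries.coeff_prod_one_add_C_mul_X _ _ d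

theorem coeff_esymYSeries (d : ℕ) : PowerSeries.coeff d (esymYSeries n p) = esymY n p d :=
  PowerSeries.coeff_prod_one_add_C_mul_X _ _ d

theorem esymXSeries_mul_esymXSeriesInv : esymXSeries n p * esymXSeriesInv n p = 1 := by
  rw [esymXSeries, esymXSeriesInv, ← prod_mul_distrib]
  exact prod_eq_one fun a _ => PowerSeries.one_add_C_mul_X_mul_mk_neg_pow _

theorem coeff_esymXSeriesInv (d : ℕ) :
    PowerSeries.coeff d (esymXSeriesInv n p) = (-1) ^ d * hsymX n p d := by
  rw [esymXSeriesInv, PowerSeries.coeff_prod, hsymX, mul_sum]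
  refine sum_nbij' (fun l => ⇑l) (fun f => Finsupp.equivFunOnFinite.symm f) ?_ ?_ ?_ ?_ ?_
  · intro l hl
    rw [mem_finsuppAntidiag] at hl
    simpa [Nat.mem_antidiagonalTuple] using hl.1
  · intro f hf
    rw [Nat.mem_antidiagonalTuple] at hf
    simpa [mem_finsuppAntidiag, sum_apply'] using hf
  · intro l _; exact Finsupp.equivFunOnFinite.symm_apply_apply l
  · intro f _; rfl
  · intro l hl
    rw [mem_finsuppAntidiag] at hl
    simp only [PowerSeries.coeff_mk, neg_pow (X _ : MvPolynomial (Fin n ⊕ Fin p) ℤ),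
      prod_mul_distrib, prod_pow_eq_pow_sum]
    rw [hl.1]

theorem coeff_esymXSeriesInv_mul_esymYSeries (d : ℕ) :
    PowerSeries.coeff d (esymXSeriesInv n p * esymYSeries n p) = cpoly n p d := by
  rw [PowerSeries.coeff_mul, Nat.sum_antidiagonal_eq_sum_range_succ_mk, cpoly]
  simp only [coeff_esymXSeriesInv, coeff_esymYSeries]

theorem sum_esymX_mul_cpoly (d : ℕ) :
    ∑ a ∈ range (d + 1), esymX n p a * cpoly n p (d - a) = esymY n p d := by
  have hY : esymYSeries n p = esymXSeries n p * (esymXSeriesInv n p * esymYSeries n p) := by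
    rw [← mul_assoc, esymXSeries_mul_esymXSeriesInv, one_mul]
  rw [← coeff_esymYSeries, hY, PowerSeries.coeff_mul, Nat.sum_antidiagonal_eq_sum_range_succ_mk]
  simp only [coeff_esymXSeries, coeff_esymXSeriesInv_mul_esymYSeries]

theorem esymX_eq_zero {a : ℕ} (h : n < a) : esymX n p a = 0 := by
  rw [esymX, powersetCard_eq_empty.2 (by simpa using h), sum_empty]

theorem esymX_zero : esymX n p 0 = 1 := by
  simp [esymX]

theorem esymY_eq_zero {b : ℕ} (h : p < b) : esymY n p b = 0 := by
  rw [esymY, powersetCard_eq_empty.2 (by simpa using h), sum_empty]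

theorem cInt_natCast (d : ℕ) : cInt n p d = cpoly n p d := by
  simp [cInt]

theorem cInt_of_neg {d : ℤ} (h : d < 0) : cInt n p d = 0 :=
  if_neg h.not_ge

theorem sum_esymX_mul_cInt_eq_zero {D : ℤ} (hD : p < D) {m : ℕ} (hm : n ≤ m) :
    ∑ a ∈ range (m + 1), esymX n p a * cInt n p (D - a) = 0 := by
  lift D to ℕ using by omega
  have hmD : range (m + 1) ⊆ range (m + D + 1) := range_subset_range.2 (by omega)
  have hDm : range (D + 1) ⊆ range (m + D + 1) := range_subset_range.2 (by omega)
  calc ∑ a ∈ range (m + 1), esymX n p a * cInt n p (D - a)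
      = ∑ a ∈ range (m + D + 1), esymX n p a * cInt n p (D - a) :=
        sum_subset hmD fun a _ ha => by
          rw [esymX_eq_zero n p (by simp at ha; omega), zero_mul]
    _ = ∑ a ∈ range (D + 1), esymX n p a * cInt n p (D - a) :=
        (sum_subset hDm fun a _ ha => by
          rw [cInt_of_neg n p (by simp at ha; omega), mul_zero]).symm
    _ = ∑ a ∈ range (D + 1), esymX n p a * cpoly n p (D - a) :=
        sum_congr rfl fun a ha => by
          rw [← Nat.cast_sub (by simp at ha; omega), cInt_natCast]
    _ = 0 := by
      rw [sum_esymX_mul_cpoly, esymY_eq_zero n p (by exact_mod_cast hD)]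

end SymmetricFunctions

theorem supersymmetric_schur_vanishes_general (n p : ℕ)
    (lam : ℕ → ℕ)
    (N : ℕ) (hlamN : ∀ k, N ≤ k → lam k = 0)
    (hblock : ∀ l, l < p + 1 → n + 1 ≤ lam l) :
    superSchur n p lam = 0 := by
  have hn : n < lam 0 := hblock 0 p.succ_pos
  rw [superSchur, ← mul_one (Matrix.det _),
    ← Matrix.det_upperToeplitz (r := lam 0) (esymX_zero n p), ← Matrix.det_mul]
  refine Matrix.det_eq_zero_of_card_lt (S := Iic ⟨n, hn⟩) (T := Iio ⟨n, hn⟩) (by simp)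
    fun k hk l hl => ?_
  replace hk : (k : ℕ) ≤ n := Fin.le_iff_val_le_val.1 (mem_Iic.1 hk)
  replace hl : n ≤ (l : ℕ) := Fin.le_iff_val_le_val.1 (not_lt.1 (mt mem_Iio.2 hl))
  have hconj : p + 1 ≤ conjP lam k := le_conjP hlamN fun l hl => (hblock l hl).trans' (by omega)
  rw [Matrix.of_add_mul_upperToeplitz_apply (fun k => (conjP lam k : ℤ) - k)]
  exact sum_esymX_mul_cInt_eq_zero n p (by omega) hl

theorem supersymmetric_schur_vanishes (n p : ℕ) (hn : 1 ≤ n) (hp : 1 ≤ p)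
    (lam : ℕ → ℕ) (hlam : Antitone lam)
    (N : ℕ) (hlamN : ∀ k, N ≤ k → lam k = 0)
    (hblock : ∀ l, l < p + 1 → n + 1 ≤ lam l) :
    superSchur n p lam = 0 :=
  supersymmetric_schur_vanishes_general n p lam N hlamN hblock
end

section
/- Let n ≥ 1 and let ν, μ be partitions with l(ν) ≤ n and l(μ) ≤ n. Then ∑_{α} E_{ν/α}(n) = det[ Ĉ(ν_k + n − k, μ_l + n − l) − Ĉ(ν_k + n − k, μ_{l+1} + n − l − 1) ]_{1≤k,l≤n}, where the sum on the left is over all integer sequences α = (α_1,…,α_n) with μ_{l+1} ≤ α_l ≤ μ_l for each 1 ≤ l ≤ n (with μ_{n+1} := 0; every such α is automatically a partition), and with the convention Ĉ(a, b) = 0 for b < 0. -/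
/-!
Write `a_k = ν_k + n − k` and `d_l = n − l`.  In column `l` the two `Ĉ`'s are the partial sums
of `C(a_k, ·)` up to `μ_l + d_l` and up to `μ_{l+1} + d_l − 1`, so the entry is
`∑_{c = μ_{l+1}}^{μ_l} C(a_k, c + d_l)`.  Expanding the determinant multilinearly in its columns
turns it into the sum, over all `α` with `μ_{l+1} ≤ α_l ≤ μ_l`, of
`det[C(a_k, α_l + d_l)] = E_{ν/α}(n)`.
-/

open Finset

/-- `Ĉ(a,b) = ∑_{j=0}^{b} C(a,j)` for `b ≥ 0`, and `Ĉ(a,b) = 0` for `b < 0`. -/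
def ChatZ (a : ℕ) (b : ℤ) : ℤ :=
  if 0 ≤ b then ∑ j ∈ Finset.range (b.toNat + 1), (a.choose j : ℤ) else 0

lemma ChatZ_natCast_sub_one (a c : ℕ) :
    ChatZ a ((c : ℤ) - 1) = ∑ j ∈ range c, (a.choose j : ℤ) := by
  rcases c with _ | c <;> simp [ChatZ]

lemma ChatZ_sub_ChatZ (a : ℕ) {b c : ℕ} (h : c ≤ b) :
    ChatZ a ((b : ℤ) - 1) - ChatZ a ((c : ℤ) - 1) = ∑ j ∈ Ico c b, (a.choose j : ℤ) := by
  rw [ChatZ_natCast_sub_one, ChatZ_natCast_sub_one, sum_Ico_eq_sub _ h]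

lemma ChatZ_sub_ChatZ_eq_sum_choose (a : ℕ) {n l : ℕ} (hl : l < n) {p q : ℕ}
    (hqp : q ≤ p + 1) :
    ChatZ a ((p : ℤ) + n - 1 - l) - ChatZ a ((q : ℤ) + n - 1 - (l + 1))
      = ∑ c ∈ Ico q (p + 1), (a.choose (c + (n - 1 - l)) : ℤ) := by
  have hp : (p : ℤ) + n - 1 - l = ((p + 1 + (n - 1 - l) : ℕ) : ℤ) - 1 := by push_cast; omega
  have hq : (q : ℤ) + n - 1 - (l + 1) = ((q + (n - 1 - l) : ℕ) : ℤ) - 1 := by push_cast; omega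
  rw [hp, hq, ChatZ_sub_ChatZ _ (by omega), ← sum_Ico_add' (fun j => (a.choose j : ℤ))]

lemma Matrix.det_of_sum_col_eq_sum_piFinset {R ι κ : Type*} [CommRing R] [Fintype ι]
    [DecidableEq ι] (S : ι → Finset κ) (f : ι → ι → κ → R) :
    (Matrix.of fun k l => ∑ c ∈ S l, f k l c).det
      = ∑ r ∈ Fintype.piFinset S, (Matrix.of fun k l => f k l (r l)).det := by
  have hT : (Matrix.of fun k l => ∑ c ∈ S l, f k l c).transpose
      = fun l => ∑ c ∈ S l, fun k => f k l c := by
    ext l k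
    simp [Finset.sum_apply]
  rw [← Matrix.det_transpose, hT]
  exact (Matrix.detRowAlternating.map_sum_finset (fun l c k => f k l c) S).trans
    (sum_congr rfl fun r _ => Matrix.det_transpose _)

lemma sum_boundedTuples_eq_sum_piFinset {ι M : Type*} [Fintype ι] [DecidableEq ι]
    [AddCommMonoid M] (lo hi : ι → ℕ) (g : (ι → ℕ) → M) :
    (∑ α : (l : ι) → Fin (hi l + 1), if ∀ l, lo l ≤ (α l : ℕ) then g (fun l => α l) else 0)
      = ∑ r ∈ Fintype.piFinset fun l => Ico (lo l) (hi l + 1), g r := by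
  rw [← sum_filter]
  refine sum_nbij' (fun α l => α l) (fun r l => ⟨min (r l) (hi l), by omega⟩) ?_ ?_ ?_ ?_ ?_
  · intro α hα
    simp_all [Nat.lt_succ_iff.mp (α _).isLt]
  · intro r hr
    simp_all
  · intro α _
    funext l
    ext
    simp [Nat.lt_succ_iff.mp (α l).isLt]
  · intro r hr
    funext l
    simp_all
  · intro α _
    rfl

theorem sum_Edet_eq_det_Chat_diff_general (n : ℕ) (nu mu : ℕ → ℕ)
    (hmu : Antitone mu) :
    (∑ α : (l : Fin n) → Fin (mu (l : ℕ) + 1),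
        if (∀ l : Fin n, mu ((l : ℕ) + 1) ≤ (α l : ℕ)) then Edet n nu (extF α) else 0)
      = (Matrix.of fun k l : Fin n =>
          ChatZ (nu k + (n - 1 - (k : ℕ))) ((mu (l : ℕ) : ℤ) + n - 1 - (l : ℕ))
            - ChatZ (nu k + (n - 1 - (k : ℕ)))
                ((mu ((l : ℕ) + 1) : ℤ) + n - 1 - ((l : ℕ) + 1))).det := by
  have hEdet (α : (l : Fin n) → Fin (mu l + 1)) : Edet n nu (extF α)
      = (Matrix.of fun k l : Fin n =>
          ((nu k + (n - 1 - k)).choose ((α l : ℕ) + (n - 1 - l)) : ℤ)).det := by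
    simp [Edet, extF]
  have hcols : (Matrix.of fun k l : Fin n =>
      ChatZ (nu k + (n - 1 - (k : ℕ))) ((mu (l : ℕ) : ℤ) + n - 1 - (l : ℕ))
        - ChatZ (nu k + (n - 1 - (k : ℕ))) ((mu ((l : ℕ) + 1) : ℤ) + n - 1 - ((l : ℕ) + 1)))
      = Matrix.of fun k l : Fin n => ∑ c ∈ Ico (mu (l + 1)) (mu l + 1),
          ((nu k + (n - 1 - k)).choose (c + (n - 1 - l)) : ℤ) := by
    ext k l
    have hmu_succ : mu (l + 1) ≤ mu l := hmu (Nat.le_add_right _ 1)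
    exact ChatZ_sub_ChatZ_eq_sum_choose _ l.isLt (by omega)
  simp_rw [hEdet, hcols, Matrix.det_of_sum_col_eq_sum_piFinset]
  convert sum_boundedTuples_eq_sum_piFinset (fun l : Fin n => mu (l + 1)) (fun l => mu l) _
    using 3
  rfl

theorem sum_Edet_eq_det_Chat_diff (n : ℕ) (hn : 1 ≤ n) (nu mu : ℕ → ℕ)
    (hnu : Antitone nu) (hmu : Antitone mu)
    (hnulen : ∀ k, n ≤ k → nu k = 0) (hmulen : ∀ k, n ≤ k → mu k = 0) :
    (∑ α : (l : Fin n) → Fin (mu (l : ℕ) + 1),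
        if (∀ l : Fin n, mu ((l : ℕ) + 1) ≤ (α l : ℕ)) then Edet n nu (extF α) else 0)
      = (Matrix.of fun k l : Fin n =>
          ChatZ (nu k + (n - 1 - (k : ℕ))) ((mu (l : ℕ) : ℤ) + n - 1 - (l : ℕ))
            - ChatZ (nu k + (n - 1 - (k : ℕ)))
                ((mu ((l : ℕ) + 1) : ℤ) + n - 1 - ((l : ℕ) + 1))).det :=
  sum_Edet_eq_det_Chat_diff_general n nu mu hmu
end

section
/- Let n ≥ 1 and let ν, μ be partitions with l(ν) ≤ n and l(μ) ≤ n. Then ∑_{α} E_{ν/α}(n) = F_{ν/μ}(n), where the sum is over all integer sequences α = (α_1,…,α_n) with μ_{l+1} ≤ α_l ≤ μ_l for each 1 ≤ l ≤ n (with μ_{n+1} := 0; every such α is automatically a partition; equivalently, α runs over the partitions such that μ/α is a horizontal strip). -/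
/-!
STATEMENT 8: `∑_{α} E_{ν/α}(n) = F_{ν/μ}(n)`, the sum being over all sequences `α`
with `μ_{l+1} ≤ α_l ≤ μ_l` for `1 ≤ l ≤ n` (with `μ_{n+1} = 0`), where
`F_{ν/μ}(n) = det[ Ĉ(ν_k + n − k, μ_l + n − l) ]_{1≤k,l≤n}` and
`Ĉ(a,b) = ∑_{j=0}^{b} C(a,j)`.  Partitions are encoded 0-based as functions `ℕ → ℕ`.
-/

open Finset

/-- `Ĉ(a,b) = ∑_{j=0}^{b} C(a,j)`. -/
def Chat (a b : ℕ) : ℤ := ∑ j ∈ Finset.range (b + 1), (a.choose j : ℤ)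

/-- `F_{λ/μ}(n) = det[ Ĉ(λ_k + n − k, μ_l + n − l) ]_{1≤k,l≤n}` (indices written 0-based). -/
def Fdet (n : ℕ) (lam mu : ℕ → ℕ) : ℤ :=
  (Matrix.of fun k l : Fin n =>
    Chat (lam k + (n - 1 - (k : ℕ))) (mu l + (n - 1 - (l : ℕ)))).det

/-!
With `a_k = ν_k + n - 1 - k`, the entry `Ĉ(a_k, μ_l + n - 1 - l)` is the sum of `C(a_k, j)` over
the consecutive intervals `μ_{m+1} + n - 1 - m ≤ j < μ_m + n - m`, `m ≥ l`, which tile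
`[0, μ_l + n - l)` because `μ` is antitone and `μ_n = 0`. So `F` is the matrix of interval sums
times a unitriangular matrix, and expanding its determinant column by column gives one binomial
determinant for each choice of a point `α_l + n - 1 - l` in every interval, i.e. for each `α`
with `μ_{l+1} ≤ α_l ≤ μ_l`.
-/

namespace Finset

theorem sum_Ico_sum_Ico_of_antitone {M : Type*} [AddCommMonoid M] (f : ℕ → M) {c : ℕ → ℕ}
    (hc : Antitone c) {l n : ℕ} (hln : l ≤ n) :
    ∑ m ∈ Ico l n, ∑ j ∈ Ico (c (m + 1)) (c m), f j = ∑ j ∈ Ico (c n) (c l), f j := by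
  induction n, hln using Nat.le_induction with
  | base => simp
  | succ n hln ih =>
    rw [sum_Ico_succ_top hln, ih, add_comm,
      sum_Ico_consecutive f (hc n.le_succ) (hc hln)]

end Finset

theorem Fin.sum_Ici_eq_sum_Ico {M : Type*} [AddCommMonoid M] {n : ℕ} (l : Fin n) (g : ℕ → M) :
    ∑ m ∈ Finset.Ici l, g m = ∑ m ∈ Finset.Ico (l : ℕ) n, g m := by
  rw [← Fin.map_valEmbedding_Ici, Finset.sum_map]
  rfl

namespace Matrix

variable {ι R : Type*} [Fintype ι] [CommRing R]

theorem det_of_sum_finset [DecidableEq ι] {κ : Type*} (S : ι → Finset κ) (f : ι → κ → R) :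
    (of fun k l => ∑ j ∈ S l, f k j).det
      = ∑ r ∈ Fintype.piFinset S, (of fun k l => f k (r l)).det := by
  rw [← det_transpose]
  have h := (detRowAlternating (R := R) (n := ι)).toMultilinearMap.map_sum_finset
    (fun l j k => f k j) S
  convert h using 1
  · congr 1; ext l k; simp [Finset.sum_apply]
  · refine Finset.sum_congr rfl fun r _ => ?_
    rw [← det_transpose]; rfl

theorem det_of_sum_Ici [LinearOrder ι] [LocallyFiniteOrderTop ι] (G : Matrix ι ι R) :
    (of fun k l => ∑ m ∈ Finset.Ici l, G k m).det = G.det := by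
  have hU : (of fun m l : ι => if l ≤ m then (1 : R) else 0).det = 1 := by
    rw [det_of_isLowerTriangular]
    · simp
    · intro i j hij
      simp [not_le.mpr (OrderDual.toDual_lt_toDual.mp hij)]
  have : (of fun k l => ∑ m ∈ Finset.Ici l, G k m) = G * of fun m l => if l ≤ m then 1 else 0 := by
    ext k l; simp [mul_apply, ← Finset.sum_filter, Finset.filter_le_eq_Ici]
  rw [this, det_mul, hU, mul_one]

end Matrix

open Matrix

theorem Fdet_eq_det_of_sum_Ico (n : ℕ) (nu mu : ℕ → ℕ) (hmu : Antitone mu) (hmun : mu n = 0) :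
    Fdet n nu mu = (of fun k l : Fin n =>
      ∑ j ∈ Ico (mu (l + 1) + (n - (l + 1))) (mu l + (n - l)),
        ((nu k + (n - 1 - k)).choose j : ℤ)).det := by
  have hc : Antitone fun m => mu m + (n - m) := fun i j h =>
    add_le_add (hmu h) (Nat.sub_le_sub_left h n)
  rw [Fdet]
  conv_rhs => rw [← det_of_sum_Ici]
  congr 1
  ext k l
  simp only [of_apply]
  rw [Fin.sum_Ici_eq_sum_Ico l (fun m => ∑ j ∈ Ico (mu (m + 1) + (n - (m + 1))) (mu m + (n - m)),
        ((nu k + (n - 1 - k)).choose j : ℤ)),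
    sum_Ico_sum_Ico_of_antitone _ hc l.is_lt.le, Chat, range_eq_Ico]
  congr 2
  · simp [hmun]
  · omega

theorem sum_horizontalStrip_eq_sum_piFinset {M : Type*} [AddCommMonoid M] (n : ℕ) (mu : ℕ → ℕ)
    (g : (Fin n → ℕ) → M) :
    ∑ α : (l : Fin n) → Fin (mu l + 1),
        (if ∀ l : Fin n, mu (l + 1) ≤ α l then g fun l => α l + (n - 1 - l) else 0)
      = ∑ r ∈ Fintype.piFinset fun l : Fin n => Ico (mu (l + 1) + (n - (l + 1))) (mu l + (n - l)),
          g r := by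
  rw [← sum_filter]
  refine sum_nbij (fun α l => α l + (n - 1 - l)) ?_ ?_ ?_ fun _ _ => rfl
  · intro α hα
    simp only [mem_filter, mem_univ, true_and] at hα
    simp only [Fintype.mem_piFinset, mem_Ico]
    intro l
    have := (α l).isLt
    have := hα l
    omega
  · intro α _ β _ h
    funext l
    have := congrFun h l
    exact Fin.ext (by simpa using this)
  · intro r hr
    simp only [mem_coe, Fintype.mem_piFinset, mem_Ico] at hr
    refine ⟨fun l => ⟨r l - (n - 1 - l), by have := hr l; omega⟩, ?_, ?_⟩
    · simp only [mem_coe, mem_filter, mem_univ, true_and]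
      intro l; have := hr l; omega
    · funext l; have := hr l; simp only; omega

theorem Edet_extF (n : ℕ) (lam mu : ℕ → ℕ) (α : (l : Fin n) → Fin (mu l + 1)) :
    Edet n lam (extF α)
      = (of fun k l : Fin n => ((lam k + (n - 1 - k)).choose (α l + (n - 1 - l)) : ℤ)).det := by
  simp [Edet, extF]

theorem sum_Edet_eq_Fdet_general (n : ℕ) (nu mu : ℕ → ℕ)
    (hmu : Antitone mu)
    (hmulen : ∀ k, n ≤ k → mu k = 0) :
    (∑ α : (l : Fin n) → Fin (mu (l : ℕ) + 1),
        if (∀ l : Fin n, mu ((l : ℕ) + 1) ≤ (α l : ℕ)) then Edet n nu (extF α) else 0)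
      = Fdet n nu mu := by
  rw [Fdet_eq_det_of_sum_Ico n nu mu hmu (hmulen n le_rfl), det_of_sum_finset,
    ← sum_horizontalStrip_eq_sum_piFinset]
  simp only [Edet_extF]

theorem sum_Edet_eq_Fdet (n : ℕ) (hn : 1 ≤ n) (nu mu : ℕ → ℕ)
    (hnu : Antitone nu) (hmu : Antitone mu)
    (hnulen : ∀ k, n ≤ k → nu k = 0) (hmulen : ∀ k, n ≤ k → mu k = 0) :
    (∑ α : (l : Fin n) → Fin (mu (l : ℕ) + 1),
        if (∀ l : Fin n, mu ((l : ℕ) + 1) ≤ (α l : ℕ)) then Edet n nu (extF α) else 0)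
      = Fdet n nu mu :=
  sum_Edet_eq_Fdet_general n nu mu hmu hmulen
end

section
/- (Well-definedness of the intrinsic second derivative, chart version.) Let E and F be finite-dimensional complex normed vector spaces, let f : E → F be twice continuously differentiable (C² over ℂ), let x ∈ E, and let X, Y ∈ ker(Df(x)), where Df(x) denotes the Fréchet derivative of f at x. Let η : E → E be continuously differentiable with η(x) = Y, and let g : F → ℂ be twice continuously differentiable such that Dg(f(x)) vanishes on the range of Df(x). Then the derivative at x, in the direction X, of the function z ↦ D(g∘f)(z)(η(z)) equals Dg(f(x))( D²f(x)(X, Y) ), where D²f(x) = D(Df)(x) is the second derivative of f at x viewed as a bilinear map E × E → F. In particular, the value of the iterated derivative ξη(g∘f)(x) modulo the image of Df(x) depends only on X = ξ(x) and Y = η(x), so the intrinsic second derivative d²_x f : Sym²(ker Df(x)) → coker Df(x) is well defined. -/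
/-!
By the chain rule, `z ↦ D(g∘f)(z)(η z)` is `z ↦ Dg(f z)(Df(z)(η z))`, and the product rule
splits its derivative at `x` in the direction `X` into three terms:
`Dg(f x)(Df(x)(Dη(x) X))`, which vanishes because `Dg(f x)` kills the range of `Df(x)`;
`D²g(f x)(Df(x) X, Df(x) Y)`, which vanishes because `X ∈ ker Df(x)`;
and the surviving term `Dg(f x)(D²f(x)(X, Y))`.
-/

open Filter Topology

section

variable {𝕜 E F G : Type*} [NontriviallyNormedField 𝕜]
  [NormedAddCommGroup E] [NormedSpace 𝕜 E] [NormedAddCommGroup F] [NormedSpace 𝕜 F]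
  [NormedAddCommGroup G] [NormedSpace 𝕜 G] {f : E → F} {g : F → G} {x : E}

theorem fderiv_comp_eventuallyEq (hf : ContDiffAt 𝕜 1 f x) (hg : ContDiffAt 𝕜 1 g (f x)) :
    fderiv 𝕜 (g ∘ f) =ᶠ[𝓝 x] fun z => (fderiv 𝕜 g (f z)).comp (fderiv 𝕜 f z) := by
  filter_upwards [hf.eventually (by simp), hf.continuousAt.eventually (hg.eventually (by simp))]
    with z hfz hgz
  exact fderiv_comp z (hgz.differentiableAt one_ne_zero) (hfz.differentiableAt one_ne_zero)

theorem hasFDerivAt_fderiv_comp_apply {η : E → E} (hf : ContDiffAt 𝕜 2 f x)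
    (hg : ContDiffAt 𝕜 2 g (f x)) (hη : DifferentiableAt 𝕜 η x) :
    HasFDerivAt (fun z => fderiv 𝕜 (g ∘ f) z (η z))
      ((fderiv 𝕜 g (f x)).comp
          ((fderiv 𝕜 f x).comp (fderiv 𝕜 η x) + (fderiv 𝕜 (fderiv 𝕜 f) x).flip (η x))
        + ((fderiv 𝕜 (fderiv 𝕜 g) (f x)).comp (fderiv 𝕜 f x)).flip (fderiv 𝕜 f x (η x))) x := by
  have hDg : HasFDerivAt (fun z => fderiv 𝕜 g (f z))
      ((fderiv 𝕜 (fderiv 𝕜 g) (f x)).comp (fderiv 𝕜 f x)) x :=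
    ((hg.fderiv_right one_add_one_eq_two.le).differentiableAt one_ne_zero).hasFDerivAt.comp x
      (hf.differentiableAt two_ne_zero).hasFDerivAt
  have hDf_η : HasFDerivAt (fun z => fderiv 𝕜 f z (η z))
      ((fderiv 𝕜 f x).comp (fderiv 𝕜 η x) + (fderiv 𝕜 (fderiv 𝕜 f) x).flip (η x)) x :=
    ((hf.fderiv_right one_add_one_eq_two.le).differentiableAt one_ne_zero).hasFDerivAt.clm_apply
      hη.hasFDerivAt
  refine (hDg.clm_apply hDf_η).congr_of_eventuallyEq ?_
  filter_upwards [fderiv_comp_eventuallyEq (hf.of_le one_le_two) (hg.of_le one_le_two)] with z hz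
  rw [hz, ContinuousLinearMap.comp_apply]

end

theorem intrinsic_second_derivative_well_defined_general
    {E F : Type*}
    [NormedAddCommGroup E] [NormedSpace ℂ E]
    [NormedAddCommGroup F] [NormedSpace ℂ F]
    (f : E → F) (hf : ContDiff ℂ 2 f)
    (x : E) (X Y : E)
    (hX : fderiv ℂ f x X = 0)
    (η : E → E) (hη : ContDiff ℂ 1 η) (hηx : η x = Y)
    (g : F → ℂ) (hg : ContDiff ℂ 2 g)
    (hgval : ∀ u : E, fderiv ℂ g (f x) (fderiv ℂ f x u) = 0) :
    fderiv ℂ (fun z => fderiv ℂ (g ∘ f) z (η z)) x X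
      = fderiv ℂ g (f x) (fderiv ℂ (fderiv ℂ f) x X Y) := by
  rw [(hasFDerivAt_fderiv_comp_apply hf.contDiffAt hg.contDiffAt
    (hη.differentiable one_ne_zero x)).fderiv]
  simp [hX, hηx, hgval]

theorem intrinsic_second_derivative_well_defined
    {E F : Type*}
    [NormedAddCommGroup E] [NormedSpace ℂ E] [FiniteDimensional ℂ E]
    [NormedAddCommGroup F] [NormedSpace ℂ F] [FiniteDimensional ℂ F]
    (f : E → F) (hf : ContDiff ℂ 2 f)
    (x : E) (X Y : E)
    (hX : fderiv ℂ f x X = 0) (hY : fderiv ℂ f x Y = 0)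
    (η : E → E) (hη : ContDiff ℂ 1 η) (hηx : η x = Y)
    (g : F → ℂ) (hg : ContDiff ℂ 2 g)
    (hgval : ∀ u : E, fderiv ℂ g (f x) (fderiv ℂ f x u) = 0) :
    fderiv ℂ (fun z => fderiv ℂ (g ∘ f) z (η z)) x X
      = fderiv ℂ g (f x) (fderiv ℂ (fderiv ℂ f) x X Y) :=
  intrinsic_second_derivative_well_defined_general f hf x X Y hX η hη hηx g hg hgval
end
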